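/- In the two-occasion setting, suppose (i) consistency and positivity hold; (ii) Assumptions of sequential proximal latent randomization hold: (Z(1), A(1)) ⟂ (W(0)-potential, W(1)-potential, Y-potential) | (A(0), X̄(1), Ū(1)) and (Z(0), A(0)) ⟂ (W(0)-potential, Y-potential) | (X(0), U(0)); (iii) outcome bridge functions h1, h0 satisfy E[H1(ā(1)) | ā(1), ū(1), x̄(1)] = E[Y | ā(1), ū(1), x̄(1)] and E[Y_{ā(1)} | a(0), u(0), x(0)] = E[H0(ā(1)) | a(0), u(0), x(0)], where H1(ā(1)) = h1(W̄(1), ā(1), X̄(1)) and H0(ā(1)) = h0(W(0), ā(1), X(0)). Then E[Y_{ā(1)} | V] = E[h0(W(0), ā(1), X(0)) | V] for any baseline V ⊂ X(0). -/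

import Mathlib

open Finset MeasureTheory

open scoped Classical

/-- Probability of an event on a finite outcome space with mass function `p`. -/
noncomputable def pr {Ω : Type*} [Fintype Ω] (p : Ω → ℝ) (E : Ω → Prop) : ℝ :=
  ∑ ω, if E ω then p ω else 0

/-- Conditional expectation `E[f | E]` on a finite outcome space. -/
noncomputable def cexp {Ω : Type*} [Fintype Ω] (p : Ω → ℝ) (f : Ω → ℝ) (E : Ω → Prop) : ℝ :=
  (∑ ω, if E ω then p ω * f ω else 0) / pr p E

/-- Conditional probability `P(E | F)` on a finite outcome space. -/
noncomputable def cprob {Ω : Type*} [Fintype Ω] (p : Ω → ℝ) (E F : Ω → Prop) : ℝ :=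
  pr p (fun ω => E ω ∧ F ω) / pr p F

/-- Expectation on a finite outcome space. -/
noncomputable def pexp {Ω : Type*} [Fintype Ω] (p : Ω → ℝ) (f : Ω → ℝ) : ℝ :=
  ∑ ω, p ω * f ω

/-- `S` is conditionally independent of `T` given `C`:  for every pair of (bounded) test
functions `F, G` and every value `c` of `C` with positive probability, the conditional
expectation of the product factorizes. -/
def CondIndep {Ω α β γ : Type*} [Fintype Ω] (p : Ω → ℝ)
    (S : Ω → α) (T : Ω → β) (C : Ω → γ) : Prop :=
  ∀ (F : α → ℝ) (G : β → ℝ) (c : γ), pr p (fun ω => C ω = c) ≠ 0 →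
    cexp p (fun ω => F (S ω) * G (T ω)) (fun ω => C ω = c) =
      cexp p (fun ω => F (S ω)) (fun ω => C ω = c) *
        cexp p (fun ω => G (T ω)) (fun ω => C ω = c)

/-!
On a latent cell `{X(0) = x0, U(0) = u0}` of positive probability, latent randomization lets one
add or drop the event `{A(0) = a0}` in the conditioning of any function of `(W(0), Y_{ā(1)})`, so
`E[Y_{ā(1)} | x0, u0] = E[Y_{ā(1)} | a0, u0, x0] = E[H0(ā(1)) | a0, u0, x0] = E[H0(ā(1)) | x0, u0]`
by the bridge equation, positivity keeping the treated cell non-null. The event `{v(X(0)) = c}` is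
a union of such cells, so averaging over `(X(0), U(0))` gives the claim; null cells carry no mass.
-/

section FiniteProbability

variable {Ω : Type*} [Fintype Ω] (p : Ω → ℝ)

/-- The partial expectation `E[f; E] = E[f 1_E]`. -/
noncomputable def partialExp (f : Ω → ℝ) (E : Ω → Prop) : ℝ :=
  ∑ ω, if E ω then p ω * f ω else 0

theorem cexp_eq_partialExp_div (f : Ω → ℝ) (E : Ω → Prop) :
    cexp p f E = partialExp p f E / pr p E := rfl

theorem partialExp_one (E : Ω → Prop) : partialExp p (fun _ => 1) E = pr p E := by
  simp only [partialExp, pr, mul_one]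

theorem cexp_congr_of_eqOn {f g : Ω → ℝ} {E : Ω → Prop} (h : ∀ ω, E ω → f ω = g ω) :
    cexp p f E = cexp p g E := by
  rw [cexp_eq_partialExp_div, cexp_eq_partialExp_div]
  congr 1
  refine sum_congr rfl fun ω _ => ?_
  split_ifs with hω
  · rw [h ω hω]
  · rfl

theorem pr_and_ne_zero_of_cprob_pos {E F : Ω → Prop} (h : 0 < cprob p E F) :
    pr p (fun ω => E ω ∧ F ω) ≠ 0 := by
  intro h0
  rw [cprob, h0, zero_div] at h
  exact lt_irrefl 0 h

/-- No hypothesis on `pr p E` is needed: on a null event both sides vanish (`cexp` is then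
`x / 0 = 0`). -/
theorem partialExp_eq_cexp_mul_pr (hp : ∀ ω, 0 ≤ p ω) (f : Ω → ℝ) (E : Ω → Prop) :
    partialExp p f E = cexp p f E * pr p E := by
  by_cases hE : pr p E = 0
  · have hnull : ∀ ω, E ω → p ω = 0 := by
      rw [pr, ← sum_filter, sum_eq_zero_iff_of_nonneg fun ω _ => hp ω] at hE
      exact fun ω hω => hE ω (mem_filter.2 ⟨mem_univ ω, hω⟩)
    rw [hE, mul_zero]
    refine sum_eq_zero fun ω _ => ?_
    split_ifs with hω
    · rw [hnull ω hω, zero_mul]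
    · rfl
  · rw [cexp_eq_partialExp_div, div_mul_cancel₀ _ hE]

theorem cexp_indicator_mul (A E : Ω → Prop) (g : Ω → ℝ) :
    cexp p (fun ω => (if A ω then 1 else 0) * g ω) E =
      partialExp p g (fun ω => A ω ∧ E ω) / pr p E := by
  rw [cexp_eq_partialExp_div]
  congr 1
  refine sum_congr rfl fun ω _ => ?_
  by_cases hA : A ω <;> by_cases hE : E ω <;> simp [hA, hE]

theorem cexp_and_eq_of_condIndep {α β γ : Type*} {S : Ω → α} {T : Ω → β} {C : Ω → γ}
    (hCI : CondIndep p S T C) (A : α → Prop) (G : β → ℝ) {c : γ}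
    (hc : pr p (fun ω => C ω = c) ≠ 0) (hA : pr p (fun ω => A (S ω) ∧ C ω = c) ≠ 0) :
    cexp p (fun ω => G (T ω)) (fun ω => A (S ω) ∧ C ω = c) =
      cexp p (fun ω => G (T ω)) (fun ω => C ω = c) := by
  have h := hCI (fun s => if A s then 1 else 0) G c hc
  have hprob := cexp_indicator_mul p (fun ω => A (S ω)) (fun ω => C ω = c) (fun _ => 1)
  simp only [mul_one, partialExp_one] at h hprob
  rw [cexp_indicator_mul p (fun ω => A (S ω)), hprob, div_mul_eq_mul_div,
    div_left_inj' hc] at h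
  rw [cexp_eq_partialExp_div, div_eq_iff hA, h, mul_comm]

theorem partialExp_comp_eq_sum_image {κ : Type*} (f : Ω → ℝ) (K : Ω → κ) (P : κ → Prop) :
    partialExp p f (fun ω => P (K ω)) =
      ∑ k ∈ univ.image K, if P k then partialExp p f (fun ω => K ω = k) else 0 := by
  rw [partialExp, ← sum_fiberwise_of_maps_to (g := K) (t := univ.image K)
    fun ω _ => mem_image_of_mem K (mem_univ ω)]
  refine sum_congr rfl fun k _ => ?_
  rw [sum_filter]
  split_ifs with hk
  · refine sum_congr rfl fun ω _ => ?_
    by_cases hω : K ω = k <;> simp [hω, hk]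
  · refine sum_eq_zero fun ω _ => ?_
    by_cases hω : K ω = k <;> simp [hω, hk]

theorem cexp_comp_eq_of_forall_cexp_fiber_eq (hp : ∀ ω, 0 ≤ p ω) {κ : Type*}
    {f g : Ω → ℝ} {K : Ω → κ}
    (h : ∀ k, pr p (fun ω => K ω = k) ≠ 0 →
      cexp p f (fun ω => K ω = k) = cexp p g (fun ω => K ω = k)) (P : κ → Prop) :
    cexp p f (fun ω => P (K ω)) = cexp p g (fun ω => P (K ω)) := by
  have hfiber : ∀ k, partialExp p f (fun ω => K ω = k) = partialExp p g (fun ω => K ω = k) := by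
    intro k
    rw [partialExp_eq_cexp_mul_pr p hp, partialExp_eq_cexp_mul_pr p hp]
    by_cases hk : pr p (fun ω => K ω = k) = 0
    · rw [hk, mul_zero, mul_zero]
    · rw [h k hk]
  rw [cexp_eq_partialExp_div, cexp_eq_partialExp_div, partialExp_comp_eq_sum_image,
    partialExp_comp_eq_sum_image]
  simp only [hfiber]

end FiniteProbability

theorem stmt_8_general {Ω 𝒳0 𝒵0 𝒲0 𝒰0 𝒱 : Type*} [Fintype Ω]
    (p : Ω → ℝ) (hp : ∀ ω, 0 ≤ p ω)
    (A0 : Ω → Bool) (X0 : Ω → 𝒳0)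
    (Z0 : Ω → 𝒵0) (W0 : Ω → 𝒲0)
    (U0 : Ω → 𝒰0)
    (Y' : Bool → Bool → Ω → ℝ)
    (h0 : 𝒲0 → Bool × Bool → 𝒳0 → ℝ)
    (v : 𝒳0 → 𝒱) (a0 a1 : Bool)
    -- (i) consistency and positivity
    (hpos0 : ∀ (a : Bool) u0 x0, pr p (fun ω => U0 ω = u0 ∧ X0 ω = x0) ≠ 0 →
      0 < cprob p (fun ω => A0 ω = a) (fun ω => U0 ω = u0 ∧ X0 ω = x0))
    -- (ii) sequential proximal latent randomization
    (hLR0 : CondIndep p (fun ω => (Z0 ω, A0 ω))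
      (fun ω => (W0 ω, Y' a0 a1 ω)) (fun ω => (X0 ω, U0 ω)))
    -- (iii) latent-level outcome bridge equations
    (hbridge0 : ∀ u0 x0,
      pr p (fun ω => A0 ω = a0 ∧ U0 ω = u0 ∧ X0 ω = x0) ≠ 0 →
      cexp p (Y' a0 a1) (fun ω => A0 ω = a0 ∧ U0 ω = u0 ∧ X0 ω = x0) =
        cexp p (fun ω => h0 (W0 ω) (a0, a1) (X0 ω))
          (fun ω => A0 ω = a0 ∧ U0 ω = u0 ∧ X0 ω = x0)) :
    ∀ c : 𝒱, pr p (fun ω => v (X0 ω) = c) ≠ 0 →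
      cexp p (Y' a0 a1) (fun ω => v (X0 ω) = c) =
        cexp p (fun ω => h0 (W0 ω) (a0, a1) (X0 ω)) (fun ω => v (X0 ω) = c) := by
  intro c _
  refine cexp_comp_eq_of_forall_cexp_fiber_eq p hp (K := fun ω => (X0 ω, U0 ω)) ?_
    (fun k => v k.1 = c)
  rintro ⟨x0, u0⟩ hcell
  have hcell_eq : (fun ω => (X0 ω, U0 ω) = (x0, u0)) = fun ω => U0 ω = u0 ∧ X0 ω = x0 := by
    ext ω; simp only [Prod.mk.injEq, and_comm]
  have htreated_eq : (fun ω => A0 ω = a0 ∧ (X0 ω, U0 ω) = (x0, u0)) =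
      fun ω => A0 ω = a0 ∧ U0 ω = u0 ∧ X0 ω = x0 := by
    ext ω; simp only [Prod.mk.injEq, and_comm]
  have hA : pr p (fun ω => A0 ω = a0 ∧ U0 ω = u0 ∧ X0 ω = x0) ≠ 0 :=
    pr_and_ne_zero_of_cprob_pos p (hpos0 a0 u0 x0 (hcell_eq ▸ hcell))
  have hbridge : cexp p (Y' a0 a1) (fun ω => A0 ω = a0 ∧ (X0 ω, U0 ω) = (x0, u0)) =
      cexp p (fun ω => h0 (W0 ω) (a0, a1) (X0 ω))
        (fun ω => A0 ω = a0 ∧ (X0 ω, U0 ω) = (x0, u0)) := by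
    rw [htreated_eq]; exact hbridge0 u0 x0 hA
  rw [← htreated_eq] at hA
  calc cexp p (Y' a0 a1) (fun ω => (X0 ω, U0 ω) = (x0, u0))
      = cexp p (Y' a0 a1) (fun ω => A0 ω = a0 ∧ (X0 ω, U0 ω) = (x0, u0)) :=
        (cexp_and_eq_of_condIndep p hLR0 (fun s => s.2 = a0) (fun t => t.2) hcell hA).symm
    _ = cexp p (fun ω => h0 (W0 ω) (a0, a1) x0)
          (fun ω => A0 ω = a0 ∧ (X0 ω, U0 ω) = (x0, u0)) :=
        hbridge.trans (cexp_congr_of_eqOn p fun ω hω => by rw [(Prod.mk.inj hω.2).1])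
    _ = cexp p (fun ω => h0 (W0 ω) (a0, a1) x0) (fun ω => (X0 ω, U0 ω) = (x0, u0)) :=
        cexp_and_eq_of_condIndep p hLR0 (fun s => s.2 = a0) (fun t => h0 t.1 (a0, a1) x0)
          hcell hA
    _ = cexp p (fun ω => h0 (W0 ω) (a0, a1) (X0 ω)) (fun ω => (X0 ω, U0 ω) = (x0, u0)) :=
        cexp_congr_of_eqOn p fun ω hω => by rw [(Prod.mk.inj hω).1]

/-- two-occasion proximal g-formula via outcome confounding bridge
functions: under consistency, positivity, sequential proximal latent randomization,
and latent-level bridge equations for `(h1, h0)`, we have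
`E[Y_{ā(1)} | V] = E[h0(W(0), ā(1), X(0)) | V]` for any baseline `V = v(X(0))`. -/
theorem stmt_8 {Ω 𝒳0 𝒳1 𝒵0 𝒵1 𝒲0 𝒲1 𝒰0 𝒰1 𝒱 : Type*} [Fintype Ω]
    (p : Ω → ℝ) (hp : ∀ ω, 0 ≤ p ω) (hsum : ∑ ω, p ω = 1)
    (A0 A1 : Ω → Bool) (X0 : Ω → 𝒳0) (X1 : Ω → 𝒳1)
    (Z0 : Ω → 𝒵0) (Z1 : Ω → 𝒵1) (W0 : Ω → 𝒲0) (W1 : Ω → 𝒲1)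
    (U0 : Ω → 𝒰0) (U1 : Ω → 𝒰1)
    (Y : Ω → ℝ) (Y' : Bool → Bool → Ω → ℝ) (W1' : Bool → Ω → 𝒲1)
    (h1 : 𝒲0 × 𝒲1 → Bool × Bool → 𝒳0 × 𝒳1 → ℝ)
    (h0 : 𝒲0 → Bool × Bool → 𝒳0 → ℝ)
    (v : 𝒳0 → 𝒱) (a0 a1 : Bool)
    -- (i) consistency and positivity
    (hconsY : ∀ ω, Y ω = Y' (A0 ω) (A1 ω) ω)
    (hconsW : ∀ ω, W1 ω = W1' (A0 ω) ω)
    (hpos0 : ∀ (a : Bool) u0 x0, pr p (fun ω => U0 ω = u0 ∧ X0 ω = x0) ≠ 0 →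
      0 < cprob p (fun ω => A0 ω = a) (fun ω => U0 ω = u0 ∧ X0 ω = x0))
    (hpos1 : ∀ (a a' : Bool) u0 u1 x0 x1,
      pr p (fun ω => A0 ω = a' ∧ U0 ω = u0 ∧ U1 ω = u1 ∧ X0 ω = x0 ∧ X1 ω = x1) ≠ 0 →
      0 < cprob p (fun ω => A1 ω = a)
        (fun ω => A0 ω = a' ∧ U0 ω = u0 ∧ U1 ω = u1 ∧ X0 ω = x0 ∧ X1 ω = x1))
    -- (ii) sequential proximal latent randomization
    (hLR1 : CondIndep p (fun ω => (Z0 ω, Z1 ω, A1 ω))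
      (fun ω => (W0 ω, W1' a0 ω, Y' a0 a1 ω))
      (fun ω => (A0 ω, X0 ω, X1 ω, U0 ω, U1 ω)))
    (hLR0 : CondIndep p (fun ω => (Z0 ω, A0 ω))
      (fun ω => (W0 ω, Y' a0 a1 ω)) (fun ω => (X0 ω, U0 ω)))
    -- (iii) latent-level outcome bridge equations
    (hbridge1 : ∀ u0 u1 x0 x1,
      pr p (fun ω => A0 ω = a0 ∧ A1 ω = a1 ∧ U0 ω = u0 ∧ U1 ω = u1 ∧
        X0 ω = x0 ∧ X1 ω = x1) ≠ 0 →
      cexp p (fun ω => h1 (W0 ω, W1 ω) (a0, a1) (X0 ω, X1 ω))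
          (fun ω => A0 ω = a0 ∧ A1 ω = a1 ∧ U0 ω = u0 ∧ U1 ω = u1 ∧
            X0 ω = x0 ∧ X1 ω = x1) =
        cexp p Y (fun ω => A0 ω = a0 ∧ A1 ω = a1 ∧ U0 ω = u0 ∧ U1 ω = u1 ∧
          X0 ω = x0 ∧ X1 ω = x1))
    (hbridge0 : ∀ u0 x0,
      pr p (fun ω => A0 ω = a0 ∧ U0 ω = u0 ∧ X0 ω = x0) ≠ 0 →
      cexp p (Y' a0 a1) (fun ω => A0 ω = a0 ∧ U0 ω = u0 ∧ X0 ω = x0) =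
        cexp p (fun ω => h0 (W0 ω) (a0, a1) (X0 ω))
          (fun ω => A0 ω = a0 ∧ U0 ω = u0 ∧ X0 ω = x0)) :
    ∀ c : 𝒱, pr p (fun ω => v (X0 ω) = c) ≠ 0 →
      cexp p (Y' a0 a1) (fun ω => v (X0 ω) = c) =
        cexp p (fun ω => h0 (W0 ω) (a0, a1) (X0 ω)) (fun ω => v (X0 ω) = c) :=
  stmt_8_general p hp A0 X0 Z0 W0 U0 Y' h0 v a0 a1 hpos0 hLR0 hbridge0
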